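/- arXiv:1901.02771 — 2 statements merged into one kernel-verified Lean document; each statement's English description precedes it below -/
import Mathlib

section
/- If the time windows are structured, then in any time-feasible tour the customers assigned to a common time window occupy a contiguous block: for all indices i < j < l, if w(a_i) = w(a_l) then w(a_j) = w(a_i). -/
/-- With structured time windows, in any time-feasible tour the
customers assigned to a common time window occupy a contiguous block: for
positions `i < j < l` in the tour, if `w (a i) = w (a l)` then
`w (a j) = w (a i)`. -/
theorem window_block_contiguous
    (C : Type) (q k : ℕ)
    (a : ℕ → C) (α : ℕ → ℝ)
    (w : C → Fin q) (Sw Ew : Fin q → ℝ)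
    (s : C → ℝ) (t : C → C → ℝ)
    (hdistinct : ∀ i j, i < k → j < k → a i = a j → i = j)
    (hwin : ∀ j : Fin q, Sw j < Ew j)
    (hstruct : ∀ i j : Fin q, i < j → Ew i ≤ Sw j)
    (hs : ∀ x : C, 0 < s x)
    (ht : ∀ x y : C, 0 ≤ t x y)
    (hfeas1 : ∀ i, i < k → Sw (w (a i)) ≤ α i ∧ α i ≤ Ew (w (a i)))
    (hfeas2 : ∀ i, i + 1 < k → α (i + 1) - α i ≥ s (a i) + t (a i) (a (i + 1))) :
    ∀ i j l, i < j → j < l → l < k → w (a i) = w (a l) → w (a j) = w (a i) := by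
  have hmono : ∀ i j, i < j → j < k → α i < α j := by
    intro i j hij hjk
    induction j with
    | zero => omega
    | succ n ih =>
      have hstep : α n < α (n + 1) := by
        have h2 := hfeas2 n hjk
        have := hs (a n)
        have := ht (a n) (a (n + 1))
        linarith
      rcases Nat.lt_succ_iff_lt_or_eq.mp hij with h | h
      · exact lt_trans (ih h (by omega)) hstep
      · rw [h]; exact hstep
  intro i j l hij hjl hlk hwil
  have hik : i < k := by omega
  have hjk : j < k := by omega
  obtain ⟨hi1, hi2⟩ := hfeas1 i hik
  obtain ⟨hj1, hj2⟩ := hfeas1 j hjk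
  obtain ⟨hl1, hl2⟩ := hfeas1 l hlk
  have hαij : α i < α j := hmono i j hij hjk
  have hαjl : α j < α l := hmono j l hjl hlk
  rcases lt_trichotomy (w (a j)) (w (a i)) with h | h | h
  · exfalso
    have := hstruct _ _ h
    linarith
  · exact h
  · exfalso
    rw [hwil] at h
    have := hstruct _ _ h
    rw [← hwil] at this hl2
    linarith
end

section
/- Tree-feasibility is a necessary condition for time-feasibility: if a tour a_1, …, a_k is time-feasible and the time windows are structured, then for every time window w, listing the customers of A_w = {a_i : w(a_i) = w} in tour order as b_1, …, b_m, the chain through A_w satisfies Σ_{r=1}^{m−1} (t(b_r, b_{r+1}) + s(b_r)) ≤ e_w − s_w. In particular, there exists an ordering of A_w whose total chain weight, with edge weights t(b, b') + s(b), is at most e_w − s_w. -/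
/-- Tree-feasibility is necessary for time-feasibility.
With structured time windows, for every time window `w₀`, listing the
customers of `A_{w₀}` in tour order as `b 0, …, b (m-1)` (here `b` is the
strictly increasing enumeration of the tour positions assigned to `w₀`),
the chain through `A_{w₀}` satisfies
`∑_{r=0}^{m-2} (t (a (b r)) (a (b (r+1))) + s (a (b r))) ≤ Ew w₀ - Sw w₀`.
In particular, there exists an ordering of `A_{w₀}` whose total chain weight,
with edge weights `t x y + s x`, is at most `Ew w₀ - Sw w₀`. -/
theorem tree_feasibility_necessary
    (C : Type) (q k : ℕ)
    (a : ℕ → C) (α : ℕ → ℝ)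
    (w : C → Fin q) (Sw Ew : Fin q → ℝ)
    (s : C → ℝ) (t : C → C → ℝ)
    (hdistinct : ∀ i j, i < k → j < k → a i = a j → i = j)
    (hwin : ∀ j : Fin q, Sw j < Ew j)
    (hstruct : ∀ i j : Fin q, i < j → Ew i ≤ Sw j)
    (hs : ∀ x : C, 0 < s x)
    (ht : ∀ x y : C, 0 ≤ t x y)
    (hfeas1 : ∀ i, i < k → Sw (w (a i)) ≤ α i ∧ α i ≤ Ew (w (a i)))
    (hfeas2 : ∀ i, i + 1 < k → α (i + 1) - α i ≥ s (a i) + t (a i) (a (i + 1)))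
    -- `b 0 < b 1 < ⋯ < b (m-1)` enumerates the tour positions assigned to `w₀`:
    (w₀ : Fin q) (m : ℕ) (b : ℕ → ℕ)
    (hbk : ∀ r, r < m → b r < k)
    (hbmono : ∀ r, r + 1 < m → b r < b (r + 1))
    (hbenum : ∀ i, i < k → (w (a i) = w₀ ↔ ∃ r < m, b r = i)) :
    (∑ r ∈ Finset.range (m - 1),
        (t (a (b r)) (a (b (r + 1))) + s (a (b r))) ≤ Ew w₀ - Sw w₀) ∧
    ∃ c : ℕ → ℕ,
      (∀ r, r < m → c r < k) ∧
      (∀ r r', r < m → r' < m → c r = c r' → r = r') ∧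
      (∀ i, i < k → (w (a i) = w₀ ↔ ∃ r < m, c r = i)) ∧
      ∑ r ∈ Finset.range (m - 1),
        (t (a (c r)) (a (c (r + 1))) + s (a (c r))) ≤ Ew w₀ - Sw w₀ := by
  -- α is strictly increasing on positions < k
  have halpha : ∀ i j, i < j → j < k → α i < α j := by
    intro i j hij hjk
    induction j with
    | zero => omega
    | succ n ih =>
      have hstep : α n < α (n + 1) := by
        have := hfeas2 n hjk
        have := hs (a n); have := ht (a n) (a (n + 1)); linarith
      rcases Nat.lt_or_ge i n with h | h
      · exact lt_trans (ih h (by omega)) hstep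
      · have : i = n := by omega
        subst this; exact hstep
  -- b is strictly monotone on [0, m)
  have hb_strict : ∀ r r', r < r' → r' < m → b r < b r' := by
    intro r r' hrr' hr'm
    induction r' with
    | zero => omega
    | succ n ih =>
      have hstep : b n < b (n + 1) := hbmono n hr'm
      rcases Nat.lt_or_ge r n with h | h
      · exact lt_trans (ih h (by omega)) hstep
      · have : r = n := by omega
        subst this; exact hstep
  have hw_b : ∀ r, r < m → w (a (b r)) = w₀ := by
    intro r hr
    exact (hbenum (b r) (hbk r hr)).2 ⟨r, hr, rfl⟩
  -- consecutive enumeration: b (r+1) = b r + 1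
  have hcons : ∀ r, r + 1 < m → b (r + 1) = b r + 1 := by
    intro r hr
    by_contra hne
    have h1 : b r < b (r + 1) := hbmono r hr
    have h2 : b r + 1 < b (r + 1) := by omega
    set i := b r + 1 with hi
    have hik : i < k := lt_trans h2 (hbk (r + 1) hr)
    have hbr1k : b (r + 1) < k := hbk (r + 1) hr
    have hαlo : α (b r) < α i := halpha _ _ (by omega) hik
    have hαhi : α i < α (b (r + 1)) := halpha _ _ h2 hbr1k
    have hwne : w (a i) ≠ w₀ := by
      intro hw
      obtain ⟨r', hr'm, hbr'⟩ := (hbenum i hik).1 hw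
      have hrr' : r < r' := by
        by_contra hle
        rcases Nat.lt_or_ge r' r with h | h
        · have := hb_strict r' r h (by omega); omega
        · have : r' = r := by omega
          subst this; omega
      have hr'r : r' < r + 1 := by
        by_contra hle
        rcases Nat.lt_or_ge (r + 1) r' with h | h
        · have := hb_strict (r + 1) r' h hr'm; omega
        · have : r' = r + 1 := by omega
          subst this; omega
      omega
    have hf_i := hfeas1 i hik
    have hf_r := hfeas1 (b r) (hbk r (by omega))
    have hf_r1 := hfeas1 (b (r + 1)) hbr1k
    rw [hw_b r (by omega)] at hf_r
    rw [hw_b (r + 1) hr] at hf_r1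
    rcases lt_trichotomy (w (a i)) w₀ with h | h | h
    · have := hstruct _ _ h
      linarith [hf_i.2, hf_r.1]
    · exact hwne h
    · have := hstruct _ _ h
      linarith [hf_i.1, hf_r1.2]
  -- main sum bound
  have hmain : ∑ r ∈ Finset.range (m - 1),
      (t (a (b r)) (a (b (r + 1))) + s (a (b r))) ≤ Ew w₀ - Sw w₀ := by
    rcases Nat.eq_zero_or_pos m with hm | hm
    · subst hm
      simp [le_of_lt (hwin w₀)]
    · have hsum : ∑ r ∈ Finset.range (m - 1),
          (t (a (b r)) (a (b (r + 1))) + s (a (b r))) ≤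
          ∑ r ∈ Finset.range (m - 1), (α (b (r + 1)) - α (b r)) := by
        apply Finset.sum_le_sum
        intro r hr
        rw [Finset.mem_range] at hr
        have hr1 : r + 1 < m := by omega
        have hc := hcons r hr1
        have := hfeas2 (b r) (by rw [← hc]; exact hbk (r + 1) hr1)
        rw [← hc] at this
        linarith
      have htel : ∑ r ∈ Finset.range (m - 1), (α (b (r + 1)) - α (b r))
          = α (b (m - 1)) - α (b 0) := by
        exact Finset.sum_range_sub (fun r => α (b r)) (m - 1)
      have hf0 := hfeas1 (b 0) (hbk 0 hm)
      have hfm := hfeas1 (b (m - 1)) (hbk (m - 1) (by omega))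
      rw [hw_b 0 hm] at hf0
      rw [hw_b (m - 1) (by omega)] at hfm
      rw [htel] at hsum
      linarith [hf0.1, hfm.2]
  refine ⟨hmain, b, hbk, ?_, hbenum, hmain⟩
  intro r r' hrm hr'm heq
  by_contra hne
  rcases Nat.lt_or_ge r r' with h | h
  · have := hb_strict r r' h hr'm; omega
  · have := hb_strict r' r (by omega) hrm; omega
end
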